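/- arXiv:2208.05374 — 2 statements merged into one kernel-verified Lean document; each statement's English description precedes it below -/
import Mathlib

section
/- For λ ∈ ℝ^d and small enough β > 0, the mean of the measure ν_{β,λ}(du) = Z_{β,λ}^{-1}exp(−β^{-2}V(βu)+λ·u)du converges to λ as β → 0: lim_{β→0} E_{ν_{β,λ}}[u] = λ. -/
open MeasureTheory Real Filter Set

-- 1-d integrability lemmas
lemma int_exp_quad (a b : ℝ) (ha : 0 < a) :
    Integrable (fun t : ℝ => Real.exp (-a * t ^ 2 + b * t)) := by
  have h : ∀ t : ℝ, -a * t ^ 2 + b * t = -a * (t - b/(2*a)) ^ 2 + b^2/(4*a) := by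
    intro t; field_simp; ring
  simp_rw [h, Real.exp_add]
  exact (((integrable_exp_neg_mul_sq ha).comp_sub_right (b/(2*a))).mul_const _)

lemma int_abs_exp_quad (a b : ℝ) (ha : 0 < a) :
    Integrable (fun t : ℝ => |t| * Real.exp (-a * t ^ 2 + b * t)) := by
  refine Integrable.mono' ((int_exp_quad a (b+1) ha).add (int_exp_quad a (b-1) ha))
    ?_ (Filter.Eventually.of_forall fun t => ?_)
  · exact (continuous_abs.mul (by continuity)).aestronglyMeasurable
  · have h1 : |t| ≤ Real.exp t + Real.exp (-t) := by
      rcases abs_cases t with ⟨h, _⟩ | ⟨h, _⟩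
      · rw [h]; nlinarith [Real.add_one_le_exp t, Real.exp_nonneg (-t)]
      · rw [h]; nlinarith [Real.add_one_le_exp (-t), Real.exp_nonneg t]
    have he : (0:ℝ) < Real.exp (-a * t ^ 2 + b * t) := Real.exp_pos _
    rw [Real.norm_eq_abs, abs_of_nonneg (by positivity)]
    calc |t| * Real.exp (-a * t ^ 2 + b * t)
        ≤ (Real.exp t + Real.exp (-t)) * Real.exp (-a * t ^ 2 + b * t) := by
          apply mul_le_mul_of_nonneg_right h1 he.le
      _ = Real.exp (-a * t ^ 2 + (b+1) * t) + Real.exp (-a * t ^ 2 + (b-1) * t) := by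
          rw [add_mul, ← Real.exp_add, ← Real.exp_add]; ring_nf

lemma int_exp_neg_abs (c : ℝ) (hc : 0 < c) :
    Integrable (fun t : ℝ => Real.exp (-(c * |t|))) := by
  have hIoi : IntegrableOn (fun t : ℝ => Real.exp (-(c * |t|))) (Ioi 0) := by
    refine (exp_neg_integrableOn_Ioi 0 hc).congr_fun (fun x hx => ?_) measurableSet_Ioi
    rw [abs_of_pos hx]; simp only [neg_mul]
  have hIic : IntegrableOn (fun t : ℝ => Real.exp (-(c * |t|))) (Iic 0) := by
    rw [← Measure.map_neg_eq_self (volume : Measure ℝ)]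
    have m : MeasurableEmbedding fun x : ℝ => -x := (Homeomorph.neg ℝ).measurableEmbedding
    rw [m.integrableOn_map_iff]
    simp_rw [Function.comp_def, abs_neg, neg_preimage, neg_Iic, neg_zero]
    exact (integrableOn_Ici_iff_integrableOn_Ioi (by simp)).mpr hIoi
  rw [← integrableOn_univ, ← Set.Iic_union_Ioi (a := (0:ℝ))]
  exact hIic.union hIoi

lemma int_abs_exp_neg_abs (c : ℝ) (hc : 0 < c) :
    Integrable (fun t : ℝ => |t| * Real.exp (-(c * |t|))) := by
  refine Integrable.mono' ((int_exp_neg_abs (c/2) (by positivity)).const_mul (2/c))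
    ((continuous_abs.mul (by continuity)).aestronglyMeasurable)
    (Filter.Eventually.of_forall fun t => ?_)
  rw [Real.norm_eq_abs, abs_of_nonneg (by positivity)]
  have h1 : |t| ≤ 2/c * Real.exp (c/2 * |t|) := by
    have h2 := Real.add_one_le_exp (c/2 * |t|)
    calc |t| = 2/c * (c/2 * |t|) := by field_simp
      _ ≤ 2/c * Real.exp (c/2 * |t|) := by
          apply mul_le_mul_of_nonneg_left (by linarith) (by positivity)
  calc |t| * Real.exp (-(c * |t|)) ≤ (2/c * Real.exp (c/2*|t|)) * Real.exp (-(c * |t|)) := by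
        apply mul_le_mul_of_nonneg_right h1 (Real.exp_pos _).le
    _ = 2/c * Real.exp (-(c/2 * |t|)) := by rw [mul_assoc, ← Real.exp_add]; ring_nf


variable {d : ℕ} {V : (Fin d → ℝ) → ℝ}

-- derivative of g w t = V (t • w)
lemma hasDerivAt_g (hsmooth : ContDiff ℝ (⊤ : ℕ∞) V) (w : Fin d → ℝ) (t : ℝ) :
    HasDerivAt (fun s : ℝ => V (s • w)) (fderiv ℝ V (t • w) w) t := by
  have h1 : HasDerivAt (fun s : ℝ => s • w) ((1:ℝ) • w) t := (hasDerivAt_id t).smul_const w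
  have h2 : HasFDerivAt V (fderiv ℝ V (t • w)) (t • w) :=
    (hsmooth.differentiable (by simp) (t • w)).hasFDerivAt
  simpa [Function.comp_def] using h2.comp_hasDerivAt t h1

lemma hasDerivAt_g' (hsmooth : ContDiff ℝ (⊤ : ℕ∞) V) (w : Fin d → ℝ) (t : ℝ) :
    HasDerivAt (fun s : ℝ => fderiv ℝ V (s • w) w)
      (fderiv ℝ (fderiv ℝ V) (t • w) w w) t := by
  have hF : ContDiff ℝ (⊤ : ℕ∞) (fderiv ℝ V) := hsmooth.fderiv_right (by simp)
  have h1 : HasDerivAt (fun s : ℝ => s • w) ((1:ℝ) • w) t := (hasDerivAt_id t).smul_const w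
  have h2 : HasFDerivAt (fderiv ℝ V) (fderiv ℝ (fderiv ℝ V) (t • w)) (t • w) :=
    (hF.differentiable (by simp) (t • w)).hasFDerivAt
  have h3 : HasDerivAt (fun s : ℝ => fderiv ℝ V (s • w))
      (fderiv ℝ (fderiv ℝ V) (t • w) w) t := by simpa [Function.comp_def] using h2.comp_hasDerivAt t h1
  have h4 := (ContinuousLinearMap.apply ℝ ℝ w).hasFDerivAt.comp_hasDerivAt t h3
  simpa [Function.comp_def] using h4

-- quadratic form at 0
lemma quad_at_zero
    (hhess : ∀ i j : Fin d,
      iteratedFDeriv ℝ 2 V 0 ![Pi.single i 1, Pi.single j 1] = if i = j then 1 else 0)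
    (w : Fin d → ℝ) :
    fderiv ℝ (fderiv ℝ V) 0 w w = ∑ i, (w i) ^ 2 := by
  have he : ∀ i j : Fin d, fderiv ℝ (fderiv ℝ V) 0 (Pi.single i 1) (Pi.single j 1)
      = if i = j then 1 else 0 := by
    intro i j
    have := hhess i j
    rwa [iteratedFDeriv_two_apply] at this
  have hw : w = ∑ i, (w i) • (Pi.single i 1 : Fin d → ℝ) := by
    ext j; simp [Pi.single_apply]
  conv_lhs => rw [hw]
  simp only [map_sum, ContinuousLinearMap.sum_apply, _root_.map_smul, ContinuousLinearMap.smul_apply,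
    ContinuousLinearMap.coe_sum', Finset.sum_apply, ContinuousLinearMap.coe_smul',
    Pi.smul_apply, smul_eq_mul, he]
  simp [mul_ite, Finset.sum_ite_eq, pow_two]

-- pointwise limit
lemma pointwise_limit (hsmooth : ContDiff ℝ (⊤ : ℕ∞) V) (h0 : V 0 = 0)
    (hgrad : fderiv ℝ V 0 = 0) (w : Fin d → ℝ) :
    Tendsto (fun β : ℝ => (β ^ 2)⁻¹ * V (β • w)) (nhdsWithin 0 (Set.Ioi 0))
      (nhds (fderiv ℝ (fderiv ℝ V) 0 w w / 2)) := by
  have key : Tendsto (fun β : ℝ => V (β • w) / β ^ 2) (nhdsWithin 0 (Set.Ioi 0))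
      (nhds (fderiv ℝ (fderiv ℝ V) 0 w w / 2)) := by
    apply HasDerivAt.lhopital_zero_nhdsGT
      (f' := fun β => fderiv ℝ V (β • w) w) (g' := fun β => 2 * β)
    · exact Filter.Eventually.of_forall fun t => hasDerivAt_g hsmooth w t
    · refine Filter.Eventually.of_forall fun t => ?_
      simpa [mul_comm] using (hasDerivAt_pow 2 t)
    · filter_upwards [self_mem_nhdsWithin] with t ht
      exact mul_ne_zero two_ne_zero (ne_of_gt ht)
    · have hc : Continuous fun β : ℝ => V (β • w) :=
        hsmooth.continuous.comp (by continuity)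
      have := hc.tendsto 0
      rw [show V ((0:ℝ) • w) = 0 by simpa using h0] at this
      exact this.mono_left nhdsWithin_le_nhds
    · have : Tendsto (fun β : ℝ => β ^ 2) (nhds 0) (nhds 0) := by
        simpa using (continuous_pow 2).tendsto (0:ℝ)
      exact this.mono_left nhdsWithin_le_nhds
    · -- f' β / (2 β) → B w w / 2
      have hslope : Tendsto (slope (fun β : ℝ => fderiv ℝ V (β • w) w) 0)
          (nhdsWithin 0 {(0:ℝ)}ᶜ) (nhds (fderiv ℝ (fderiv ℝ V) 0 w w)) := by
        have h := hasDerivAt_g' hsmooth w 0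
        rw [hasDerivAt_iff_tendsto_slope] at h
        convert h using 2 <;> simp
      have h2 : Tendsto (fun β : ℝ => fderiv ℝ V (β • w) w / β)
          (nhdsWithin 0 (Set.Ioi 0)) (nhds (fderiv ℝ (fderiv ℝ V) 0 w w)) := by
        have := hslope.mono_left (nhdsWithin_mono 0 (fun x hx => by
          simp only [Set.mem_compl_iff, Set.mem_singleton_iff]
          exact ne_of_gt hx))
        refine this.congr fun β => ?_
        simp [slope_def_field, hgrad, div_eq_inv_mul]
      have := h2.div_const 2
      refine this.congr fun β => ?_
      rw [div_div, mul_comm]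
  refine key.congr fun β => ?_
  rw [inv_mul_eq_div]

-- norm squared vs sum of squares
lemma norm_sq_le_Q (w : Fin d → ℝ) : ‖w‖ ^ 2 ≤ ∑ i, (w i) ^ 2 := by
  rcases isEmpty_or_nonempty (Fin d) with h | h
  · simp [norm_eq_zero.mpr (Subsingleton.elim w 0)]
  · obtain ⟨i, hi⟩ := Finite.exists_max fun i => |w i|
    have hn : ‖w‖ = |w i| := by
      refine le_antisymm ?_ ?_
      · refine (pi_norm_le_iff_of_nonneg (abs_nonneg _)).mpr fun j => ?_
        simpa using hi j
      · simpa using norm_le_pi_norm w i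
    rw [hn]
    calc |w i| ^ 2 = (w i) ^ 2 := by rw [sq_abs]
      _ ≤ ∑ j, (w j) ^ 2 := Finset.single_le_sum (f := fun j => (w j)^2) (fun j _ => sq_nonneg _) (Finset.mem_univ i)

-- hessian lower bound near 0
lemma hess_lb (hsmooth : ContDiff ℝ (⊤ : ℕ∞) V)
    (hhess : ∀ i j : Fin d,
      iteratedFDeriv ℝ 2 V 0 ![Pi.single i 1, Pi.single j 1] = if i = j then 1 else 0) :
    ∃ r0 > (0:ℝ), ∀ x : Fin d → ℝ, ‖x‖ ≤ r0 →
      ∀ w : Fin d → ℝ, (∑ i, (w i) ^ 2) / 2 ≤ fderiv ℝ (fderiv ℝ V) x w w := by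
  have hG : Continuous (fderiv ℝ (fderiv ℝ V)) :=
    (hsmooth.fderiv_right (m := (⊤ : ℕ∞)) (by simp)).continuous_fderiv (by simp)
  have hc : Tendsto (fun x => fderiv ℝ (fderiv ℝ V) x) (nhds 0)
      (nhds (fderiv ℝ (fderiv ℝ V) 0)) := hG.tendsto 0
  have hmem : {y | dist y (fderiv ℝ (fderiv ℝ V) 0) ≤ 1/2} ∈
      map (fun x => fderiv ℝ (fderiv ℝ V) x) (nhds (0 : Fin d → ℝ)) :=
    hc (Metric.closedBall_mem_nhds (fderiv ℝ (fderiv ℝ V) 0) (by norm_num : (0:ℝ) < 1/2))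
  rw [Filter.mem_map, Metric.mem_nhds_iff] at hmem
  obtain ⟨ε, hε, hball⟩ := hmem
  refine ⟨ε/2, by positivity, fun x hx w => ?_⟩
  have hxb : x ∈ Metric.ball (0 : Fin d → ℝ) ε := by
    rw [Metric.mem_ball, dist_zero_right]; linarith
  have hd : dist (fderiv ℝ (fderiv ℝ V) x) (fderiv ℝ (fderiv ℝ V) 0) ≤ 1/2 := hball hxb
  replace hd := (dist_eq_norm (fderiv ℝ (fderiv ℝ V) x) (fderiv ℝ (fderiv ℝ V) 0)).symm.trans_le hd
  have hQ0 : fderiv ℝ (fderiv ℝ V) 0 w w = ∑ i, (w i) ^ 2 := quad_at_zero hhess w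
  have hdiff : |fderiv ℝ (fderiv ℝ V) x w w - fderiv ℝ (fderiv ℝ V) 0 w w|
      ≤ 1/2 * (‖w‖ * ‖w‖) := by
    have h1 : fderiv ℝ (fderiv ℝ V) x w w - fderiv ℝ (fderiv ℝ V) 0 w w
        = ((fderiv ℝ (fderiv ℝ V) x - fderiv ℝ (fderiv ℝ V) 0) w) w := by simp
    rw [h1, ← Real.norm_eq_abs]
    calc ‖((fderiv ℝ (fderiv ℝ V) x - fderiv ℝ (fderiv ℝ V) 0) w) w‖
        ≤ ‖(fderiv ℝ (fderiv ℝ V) x - fderiv ℝ (fderiv ℝ V) 0) w‖ * ‖w‖ :=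
          ContinuousLinearMap.le_opNorm _ w
      _ ≤ (‖fderiv ℝ (fderiv ℝ V) x - fderiv ℝ (fderiv ℝ V) 0‖ * ‖w‖) * ‖w‖ := by
          apply mul_le_mul_of_nonneg_right (ContinuousLinearMap.le_opNorm _ w) (norm_nonneg _)
      _ ≤ 1/2 * (‖w‖ * ‖w‖) := by
          rw [mul_assoc]
          apply mul_le_mul_of_nonneg_right hd (by positivity)
  have hw2 : ‖w‖ * ‖w‖ ≤ ∑ i, (w i) ^ 2 := by
    have := norm_sq_le_Q w; rwa [pow_two] at this
  have habs := abs_le.mp hdiff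
  rw [hQ0] at habs
  nlinarith [habs.1]

-- Case A: quadratic lower bound in the good region
lemma caseA (hsmooth : ContDiff ℝ (⊤ : ℕ∞) V) (h0 : V 0 = 0) (hgrad : fderiv ℝ V 0 = 0)
    {r0 : ℝ}
    (hQ : ∀ x : Fin d → ℝ, ‖x‖ ≤ r0 →
      ∀ w : Fin d → ℝ, (∑ i, (w i) ^ 2) / 2 ≤ fderiv ℝ (fderiv ℝ V) x w w)
    (w : Fin d → ℝ) (β : ℝ) (hβ : 0 < β) (hr : β * ‖w‖ ≤ r0) :
    (∑ i, (w i) ^ 2) / 4 * β ^ 2 ≤ V (β • w) := by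
  set Q := ∑ i, (w i) ^ 2 with hQdef
  -- derivative bound: for s ∈ [0, β], fderiv V (s•w) w ≥ Q/2 * s
  have hg'cont : Continuous fun s : ℝ => fderiv ℝ V (s • w) w := by
    have hF : Continuous (fderiv ℝ V) := (hsmooth.fderiv_right (m := (⊤ : ℕ∞)) (by simp)).continuous
    exact (ContinuousLinearMap.apply ℝ ℝ w).continuous.comp (hF.comp (by continuity))
  have hg'lb : ∀ s ∈ Set.Icc (0:ℝ) β, Q / 2 * s ≤ fderiv ℝ V (s • w) w := by
    rintro s ⟨hs0, hsβ⟩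
    rcases eq_or_lt_of_le hs0 with rfl | hs0'
    · simp [hgrad]
    · -- MVT on g' over [0, s]
      obtain ⟨ξ, hξ, hξeq⟩ := exists_hasDerivAt_eq_slope (fun t => fderiv ℝ V (t • w) w)
        (fun t => fderiv ℝ (fderiv ℝ V) (t • w) w w) hs0'
        (Continuous.continuousOn hg'cont)
        (fun t _ => hasDerivAt_g' hsmooth w t)
      have hξnorm : ‖ξ • w‖ ≤ r0 := by
        rw [norm_smul, Real.norm_eq_abs, abs_of_pos hξ.1]
        calc ξ * ‖w‖ ≤ β * ‖w‖ := by
              apply mul_le_mul_of_nonneg_right (le_trans hξ.2.le hsβ) (norm_nonneg _)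
          _ ≤ r0 := hr
      have hlb := hQ (ξ • w) hξnorm w
      have h0' : fderiv ℝ V ((0:ℝ) • w) w = 0 := by simp [hgrad]
      rw [h0'] at hξeq
      have : fderiv ℝ V (s • w) w = fderiv ℝ (fderiv ℝ V) (ξ • w) w w * s := by
        field_simp at hξeq
        linarith [hξeq]
      rw [this]
      exact mul_le_mul_of_nonneg_right hlb hs0
  -- FTC
  have hftc : V (β • w) = ∫ s in (0:ℝ)..β, fderiv ℝ V (s • w) w := by
    have := intervalIntegral.integral_eq_sub_of_hasDerivAt
      (f := fun s : ℝ => V (s • w)) (f' := fun s => fderiv ℝ V (s • w) w)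
      (fun t _ => hasDerivAt_g hsmooth w t)
      (hg'cont.intervalIntegrable 0 β)
    rw [this]
    simp [h0]
  rw [hftc]
  have hmono : ∫ s in (0:ℝ)..β, Q / 2 * s ≤ ∫ s in (0:ℝ)..β, fderiv ℝ V (s • w) w := by
    apply intervalIntegral.integral_mono_on hβ.le
    · exact (continuous_const.mul continuous_id).intervalIntegrable 0 β
    · exact hg'cont.intervalIntegrable 0 β
    · exact hg'lb
  have hval : ∫ s in (0:ℝ)..β, Q / 2 * s = Q / 4 * β ^ 2 := by
    rw [intervalIntegral.integral_const_mul, integral_id]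
    ring
  linarith [hmono, hval.symm.le]

-- Case B: linear lower bound outside the good region, via convexity
lemma caseB (hsmooth : ContDiff ℝ (⊤ : ℕ∞) V) (hconv : ConvexOn ℝ Set.univ V)
    (h0 : V 0 = 0) (hgrad : fderiv ℝ V 0 = 0)
    {r0 : ℝ} (hr0 : 0 < r0)
    (hQ : ∀ x : Fin d → ℝ, ‖x‖ ≤ r0 →
      ∀ w : Fin d → ℝ, (∑ i, (w i) ^ 2) / 2 ≤ fderiv ℝ (fderiv ℝ V) x w w)
    (w : Fin d → ℝ) (β : ℝ) (hβ : 0 < β) (hr : r0 < β * ‖w‖) :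
    β * (r0 * (∑ i, (w i) ^ 2) / (4 * ‖w‖)) ≤ V (β • w) := by
  have hwpos : 0 < ‖w‖ := by
    by_contra h
    push_neg at h
    have : ‖w‖ = 0 := le_antisymm h (norm_nonneg _)
    rw [this, mul_zero] at hr; linarith
  set s := r0 / ‖w‖ with hs
  have hspos : 0 < s := by positivity
  have hsβ : s < β := by
    rw [hs, div_lt_iff₀ hwpos]; linarith
  have hA : (∑ i, (w i) ^ 2) / 4 * s ^ 2 ≤ V (s • w) :=
    caseA hsmooth h0 hgrad hQ w s hspos (by rw [hs]; field_simp; exact le_rfl)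
  -- convexity of g
  have hg : ConvexOn ℝ Set.univ (fun t : ℝ => V (t • w)) := by
    have := hconv.comp_affineMap (LinearMap.toSpanSingleton ℝ (Fin d → ℝ) w).toAffineMap
    simpa [Function.comp_def, LinearMap.toSpanSingleton_apply] using this
  have hmems : s ∈ Set.univ \ {(0:ℝ)} := ⟨Set.mem_univ s, fun h => (ne_of_gt hspos) h⟩
  have hmemβ : β ∈ Set.univ \ {(0:ℝ)} := ⟨Set.mem_univ β, fun h => (ne_of_gt hβ) h⟩
  have hslope := hg.slope_mono (Set.mem_univ (0:ℝ)) hmems hmemβ hsβ.le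
  have h00 : V ((0:ℝ) • w) = 0 := by simpa using h0
  rw [slope_def_field, slope_def_field, h00] at hslope
  simp only [sub_zero] at hslope
  -- hslope : V (s•w)/s ≤ V (β•w)/β
  have h1 : (∑ i, (w i) ^ 2) / 4 * s ≤ V (s • w) / s := by
    rw [le_div_iff₀ hspos]
    calc (∑ i, (w i) ^ 2) / 4 * s * s = (∑ i, (w i) ^ 2) / 4 * s ^ 2 := by ring
      _ ≤ V (s • w) := hA
  have h2 : (∑ i, (w i) ^ 2) / 4 * s ≤ V (β • w) / β := le_trans h1 hslope
  rw [le_div_iff₀ hβ] at h2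
  calc β * (r0 * (∑ i, (w i) ^ 2) / (4 * ‖w‖)) = (∑ i, (w i) ^ 2) / 4 * s * β := by
        rw [hs]; field_simp
    _ ≤ V (β • w) := h2



section Pi
variable {d : ℕ}

lemma norm_le_sum_abs (u : Fin d → ℝ) : ‖u‖ ≤ ∑ i, |u i| := by
  refine (pi_norm_le_iff_of_nonneg (Finset.sum_nonneg fun i _ => abs_nonneg _)).mpr fun i => ?_
  rw [Real.norm_eq_abs]
  exact Finset.single_le_sum (f := fun j => |u j|) (fun j _ => abs_nonneg _) (Finset.mem_univ i)

lemma sum_abs_le_norm (u : Fin d → ℝ) : ∑ i, |u i| ≤ (d : ℝ) * ‖u‖ := by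
  calc ∑ i, |u i| ≤ ∑ _i : Fin d, ‖u‖ :=
        Finset.sum_le_sum fun i _ => by simpa using norm_le_pi_norm u i
    _ = (d : ℝ) * ‖u‖ := by simp [mul_comm]

lemma intProdQuad (a : ℝ) (ha : 0 < a) (c : Fin d → ℝ) :
    Integrable (fun u : Fin d → ℝ => ∏ i, Real.exp (-a * (u i) ^ 2 + c i * u i)) :=
  Integrable.fintype_prod fun i => int_exp_quad a (c i) ha

lemma intProdQuadAbs (a : ℝ) (ha : 0 < a) (c : Fin d → ℝ) (j : Fin d) :
    Integrable (fun u : Fin d → ℝ =>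
      (∏ i, Real.exp (-a * (u i) ^ 2 + c i * u i)) * |u j|) := by
  have h := Integrable.fintype_prod (E := ℝ) (μ := fun _ => volume)
    (f := fun i t => Real.exp (-a * t ^ 2 + c i * t) * (if i = j then |t| else 1))
    (fun i => by
      by_cases h : i = j <;> simp only [h, if_true, if_false, if_neg]
      · have := int_abs_exp_quad a (c j) ha
        refine this.congr (Filter.Eventually.of_forall fun t => ?_)
        ring_nf
      · simpa using int_exp_quad a (c i) ha)
  refine h.congr (Filter.Eventually.of_forall fun u => ?_)
  simp only []
  rw [Finset.prod_mul_distrib]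
  congr 1
  simp [Finset.prod_ite_eq']

lemma intProdAbs (c : ℝ) (hc : 0 < c) :
    Integrable (fun u : Fin d → ℝ => ∏ i, Real.exp (-(c * |u i|))) :=
  Integrable.fintype_prod fun _ => int_exp_neg_abs c hc

lemma intProdAbsAbs (c : ℝ) (hc : 0 < c) (j : Fin d) :
    Integrable (fun u : Fin d → ℝ => (∏ i, Real.exp (-(c * |u i|))) * |u j|) := by
  have h := Integrable.fintype_prod (E := ℝ) (μ := fun _ => volume)
    (f := fun i t => Real.exp (-(c * |t|)) * (if i = j then |t| else 1))
    (fun i => by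
      by_cases h : i = j <;> simp only [h, if_true, if_false, if_neg]
      · have := int_abs_exp_neg_abs c hc
        refine this.congr (Filter.Eventually.of_forall fun t => ?_)
        ring_nf
      · simpa using int_exp_neg_abs c hc)
  refine h.congr (Filter.Eventually.of_forall fun u => ?_)
  simp only []
  rw [Finset.prod_mul_distrib]
  congr 1
  simp [Finset.prod_ite_eq']

end Pi

section G
variable {d : ℕ}

lemma exp_sum_eq_prod (a : ℝ) (c : Fin d → ℝ) (u : Fin d → ℝ) :
    Real.exp (∑ i, (-a * (u i) ^ 2 + c i * u i)) = ∏ i, Real.exp (-a * (u i) ^ 2 + c i * u i) :=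
  Real.exp_sum _ _

lemma intExpSum (a : ℝ) (ha : 0 < a) (c : Fin d → ℝ) :
    Integrable (fun u : Fin d → ℝ => Real.exp (∑ i, (-a * (u i) ^ 2 + c i * u i))) :=
  (intProdQuad a ha c).congr (Filter.Eventually.of_forall fun u => (exp_sum_eq_prod a c u).symm)

lemma intExpSumMul (a : ℝ) (ha : 0 < a) (c : Fin d → ℝ) (j : Fin d) :
    Integrable (fun u : Fin d → ℝ => Real.exp (∑ i, (-a * (u i) ^ 2 + c i * u i)) * u j) := by
  refine Integrable.mono' (intProdQuadAbs a ha c j) ?_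
    (Filter.Eventually.of_forall fun u => ?_)
  · refine Continuous.aestronglyMeasurable ?_
    exact (Real.continuous_exp.comp (by fun_prop)).mul (continuous_apply j)
  · rw [Real.norm_eq_abs, abs_mul, abs_of_pos (Real.exp_pos _), exp_sum_eq_prod]

lemma gauss_pos (a : ℝ) (ha : 0 < a) (c : Fin d → ℝ) :
    0 < ∫ u : Fin d → ℝ, Real.exp (∑ i, (-a * (u i) ^ 2 + c i * u i)) := by
  rw [integral_pos_iff_support_of_nonneg (fun u => (Real.exp_pos _).le) (intExpSum a ha c)]
  have : (Function.support fun u : Fin d → ℝ =>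
      Real.exp (∑ i, (-a * (u i) ^ 2 + c i * u i))) = Set.univ := by
    ext u; simp [Function.mem_support, (Real.exp_pos _).ne']
  rw [this]
  exact isOpen_univ.measure_pos volume ⟨0, trivial⟩

lemma gauss_moment (lam : Fin d → ℝ) (j : Fin d) :
    (∫ u : Fin d → ℝ, Real.exp (∑ i, (-2⁻¹ * (u i) ^ 2 + lam i * u i)) * u j)
      = lam j * ∫ u : Fin d → ℝ, Real.exp (∑ i, (-2⁻¹ * (u i) ^ 2 + lam i * u i)) := by
  have h2 : (0:ℝ) < 2⁻¹ := by norm_num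
  set K : ℝ := Real.exp (∑ i, 2⁻¹ * (lam i) ^ 2) with hK
  set ψ : (Fin d → ℝ) → ℝ := fun u => Real.exp (∑ i, (-2⁻¹ * (u i) ^ 2 + 0 * u i)) with hψ
  have hψint : Integrable ψ := intExpSum 2⁻¹ h2 0
  have hψjint : Integrable fun u => ψ u * u j := intExpSumMul 2⁻¹ h2 0 j
  have htrans : ∀ u : Fin d → ℝ,
      Real.exp (∑ i, (-2⁻¹ * ((u + lam) i) ^ 2 + lam i * (u + lam) i)) = K * ψ u := by
    intro u
    rw [hψ, hK, ← Real.exp_add, ← Finset.sum_add_distrib]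
    congr 1
    refine Finset.sum_congr rfl fun i _ => ?_
    simp only [Pi.add_apply, Pi.zero_apply]
    ring
  -- Z identity
  have hZ : (∫ u : Fin d → ℝ, Real.exp (∑ i, (-2⁻¹ * (u i) ^ 2 + lam i * u i)))
      = K * ∫ u, ψ u := by
    rw [← integral_add_right_eq_self
      (fun u : Fin d → ℝ => Real.exp (∑ i, (-2⁻¹ * (u i) ^ 2 + lam i * u i))) lam]
    simp_rw [htrans]
    rw [integral_const_mul]
  -- odd moment of ψ vanishes
  have hodd : (∫ u : Fin d → ℝ, ψ u * u j) = 0 := by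
    have hneg := integral_neg_eq_self (fun u : Fin d → ℝ => ψ u * u j) volume
    have heq : ∀ u : Fin d → ℝ, ψ (-u) * (-u) j = -(ψ u * u j) := by
      intro u
      have : ψ (-u) = ψ u := by simp [hψ]
      rw [this]; simp
    rw [show (fun u : Fin d → ℝ => ψ (-u) * (-u) j) = fun u => -(ψ u * u j) from funext heq]
      at hneg
    rw [integral_neg] at hneg
    linarith [hneg]
  -- moment identity
  have hM : (∫ u : Fin d → ℝ, Real.exp (∑ i, (-2⁻¹ * (u i) ^ 2 + lam i * u i)) * u j)
      = K * (lam j * ∫ u, ψ u) := by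
    rw [← integral_add_right_eq_self
      (fun u : Fin d → ℝ => Real.exp (∑ i, (-2⁻¹ * (u i) ^ 2 + lam i * u i)) * u j) lam]
    have : ∀ u : Fin d → ℝ,
        Real.exp (∑ i, (-2⁻¹ * ((u + lam) i) ^ 2 + lam i * (u + lam) i)) * (u + lam) j
        = K * (ψ u * u j) + (K * lam j) * ψ u := by
      intro u
      rw [htrans u]
      simp only [Pi.add_apply]
      ring
    simp_rw [this]
    rw [integral_add ((hψjint.const_mul K)) ((hψint.const_mul (K * lam j))),
      integral_const_mul, integral_const_mul, hodd]
    ring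
  rw [hM, hZ]
  ring
end G

lemma sum_split (d : ℕ) (lam u : Fin d → ℝ) (a : ℝ) :
    ∑ i, (-a * (u i) ^ 2 + lam i * u i) = -(a * ∑ i, (u i) ^ 2) + ∑ i, lam i * u i := by
  rw [Finset.sum_add_distrib]
  congr 1
  rw [Finset.mul_sum, ← Finset.sum_neg_distrib]
  exact Finset.sum_congr rfl fun i _ => by ring

theorem stmt_7 {d : ℕ} (V : (Fin d → ℝ) → ℝ) (lam : Fin d → ℝ)
    (hsmooth : ContDiff ℝ (⊤ : ℕ∞) V)
    (hconv : ConvexOn ℝ Set.univ V)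
    (h0 : V 0 = 0)
    (hgrad : fderiv ℝ V 0 = 0)
    (hhess : ∀ i j : Fin d,
      iteratedFDeriv ℝ 2 V 0 ![Pi.single i 1, Pi.single j 1] = if i = j then 1 else 0) :
    Filter.Tendsto
      (fun β : ℝ =>
        (∫ u : Fin d → ℝ, Real.exp (-(β ^ 2)⁻¹ * V (β • u) + ∑ i, lam i * u i))⁻¹ •
          ∫ u : Fin d → ℝ, Real.exp (-(β ^ 2)⁻¹ * V (β • u) + ∑ i, lam i * u i) • u)
      (nhdsWithin 0 (Set.Ioi 0)) (nhds lam) := by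
  obtain ⟨r0, hr0, hQ⟩ := hess_lb hsmooth hhess
  set K : ℝ := ∑ i, |lam i| with hKdef
  have hK0 : 0 ≤ K := Finset.sum_nonneg fun i _ => abs_nonneg _
  set β₀ : ℝ := r0 / (4 * (K + 1)) with hβ₀def
  have hβ₀ : 0 < β₀ := by positivity
  set c : ℝ := ((d : ℝ) + 1)⁻¹ with hcdef
  have hc : 0 < c := by positivity
  -- dominating functions
  set bound0 : (Fin d → ℝ) → ℝ := fun u =>
    (∏ i, Real.exp (-4⁻¹ * (u i) ^ 2 + lam i * u i)) + ∏ i, Real.exp (-(c * |u i|)) with hB0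
  have hbound0int : Integrable bound0 :=
    (intProdQuad 4⁻¹ (by norm_num) lam).add (intProdAbs c hc)
  set bound1 : (Fin d → ℝ) → ℝ := fun u => bound0 u * ∑ j, |u j| with hB1
  have hbound1int : Integrable bound1 := by
    have heq : bound1 = fun u =>
        (∑ j, (∏ i, Real.exp (-4⁻¹ * (u i) ^ 2 + lam i * u i)) * |u j|)
          + ∑ j, (∏ i, Real.exp (-(c * |u i|))) * |u j| := by
      funext u
      show bound0 u * ∑ j, |u j| = _
      rw [hB0]
      simp only []
      rw [add_mul, Finset.mul_sum, Finset.mul_sum]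
    rw [heq]
    exact (integrable_finset_sum _ fun j _ => intProdQuadAbs 4⁻¹ (by norm_num) lam j).add
      (integrable_finset_sum _ fun j _ => intProdAbsAbs c hc j)
  -- continuity of the integrand
  have hVc : Continuous V := hsmooth.continuous
  have hmeas : ∀ β : ℝ, Continuous
      (fun u : Fin d → ℝ => Real.exp (-(β ^ 2)⁻¹ * V (β • u) + ∑ i, lam i * u i)) := by
    intro β
    apply Real.continuous_exp.comp
    apply Continuous.add
    · exact continuous_const.mul (hVc.comp (continuous_const_smul β))
    · exact continuous_finset_sum _ fun i _ => continuous_const.mul (continuous_apply i)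
  -- key exponent bound
  have hexp : ∀ β : ℝ, 0 < β → β ≤ β₀ → ∀ u : Fin d → ℝ,
      Real.exp (-(β ^ 2)⁻¹ * V (β • u) + ∑ i, lam i * u i) ≤ bound0 u := by
    intro β hβ hββ₀ u
    set Q : ℝ := ∑ i, (u i) ^ 2 with hQdef
    have hQ0 : 0 ≤ Q := Finset.sum_nonneg fun i _ => sq_nonneg _
    have hβ2 : (0:ℝ) < β ^ 2 := by positivity
    by_cases hcase : β * ‖u‖ ≤ r0
    · -- quadratic regime
      have hA := caseA hsmooth h0 hgrad hQ u β hβ hcase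
      have h1 : Q / 4 ≤ (β ^ 2)⁻¹ * V (β • u) := by
        rw [le_inv_mul_iff₀ hβ2]
        calc β ^ 2 * (Q / 4) = Q / 4 * β ^ 2 := by ring
          _ ≤ V (β • u) := hA
      have h2 : Real.exp (-(β ^ 2)⁻¹ * V (β • u) + ∑ i, lam i * u i)
          ≤ Real.exp (-(4⁻¹ * Q) + ∑ i, lam i * u i) := by
        apply Real.exp_le_exp.mpr
        have : 4⁻¹ * Q = Q / 4 := by ring
        rw [this]
        linarith [h1]
      calc Real.exp (-(β ^ 2)⁻¹ * V (β • u) + ∑ i, lam i * u i)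
          ≤ Real.exp (-(4⁻¹ * Q) + ∑ i, lam i * u i) := h2
        _ = ∏ i, Real.exp (-4⁻¹ * (u i) ^ 2 + lam i * u i) := by
            rw [← exp_sum_eq_prod, sum_split]
        _ ≤ bound0 u := by
            rw [hB0]
            exact le_add_of_nonneg_right (Finset.prod_nonneg fun i _ => (Real.exp_pos _).le)
    · -- linear regime
      push_neg at hcase
      have hB := caseB hsmooth hconv h0 hgrad hr0 hQ u β hβ hcase
      have hu0 : 0 < ‖u‖ := by
        rcases (norm_nonneg u).lt_or_eq with h | h
        · exact h
        · exfalso; rw [← h, mul_zero] at hcase; linarith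
      have hQn : ‖u‖ ^ 2 ≤ Q := norm_sq_le_Q u
      have h1 : (K + 1) * ‖u‖ ≤ (β ^ 2)⁻¹ * V (β • u) := by
        rw [le_inv_mul_iff₀ hβ2]
        have step1 : β ^ 2 * ((K + 1) * ‖u‖) ≤ β * (r0 * Q / (4 * ‖u‖)) := by
          rw [pow_two, mul_assoc β β _]
          apply mul_le_mul_of_nonneg_left _ hβ.le
          -- β * ((K+1) * ‖u‖) ≤ r0 * Q / (4 * ‖u‖)
          rw [le_div_iff₀ (by positivity)]
          have hββ : β * (4 * (K + 1)) ≤ r0 := by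
            rw [hβ₀def] at hββ₀
            calc β * (4 * (K + 1)) ≤ (r0 / (4 * (K + 1))) * (4 * (K + 1)) := by
                  apply mul_le_mul_of_nonneg_right hββ₀ (by positivity)
              _ = r0 := by field_simp
          calc β * ((K + 1) * ‖u‖) * (4 * ‖u‖) = (β * (4 * (K + 1))) * ‖u‖ ^ 2 := by ring
            _ ≤ r0 * Q := by
                apply mul_le_mul hββ hQn (by positivity)
                linarith [hr0]
        exact step1.trans hB
      have hlam : ∑ i, lam i * u i ≤ K * ‖u‖ := by
        rw [hKdef, Finset.sum_mul]
        apply Finset.sum_le_sum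
        intro i _
        calc lam i * u i ≤ |lam i * u i| := le_abs_self _
          _ = |lam i| * |u i| := abs_mul _ _
          _ ≤ |lam i| * ‖u‖ := by
              apply mul_le_mul_of_nonneg_left _ (abs_nonneg _)
              simpa using norm_le_pi_norm u i
      have h2 : Real.exp (-(β ^ 2)⁻¹ * V (β • u) + ∑ i, lam i * u i)
          ≤ Real.exp (-‖u‖) := by
        apply Real.exp_le_exp.mpr
        linarith [h1, hlam]
      have h3 : Real.exp (-‖u‖) ≤ ∏ i, Real.exp (-(c * |u i|)) := by
        rw [← Real.exp_sum]
        apply Real.exp_le_exp.mpr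
        have hsum : ∑ i, -(c * |u i|) = -(c * ∑ i, |u i|) := by
          rw [Finset.mul_sum, ← Finset.sum_neg_distrib]
        rw [hsum, neg_le_neg_iff]
        -- c * ∑ |u i| ≤ ‖u‖
        have h4 : ∑ i, |u i| ≤ ((d:ℝ) + 1) * ‖u‖ := by
          calc ∑ i, |u i| ≤ (d : ℝ) * ‖u‖ := sum_abs_le_norm u
            _ ≤ ((d:ℝ) + 1) * ‖u‖ := by nlinarith [norm_nonneg u]
        calc c * ∑ i, |u i| ≤ c * (((d:ℝ) + 1) * ‖u‖) :=
              mul_le_mul_of_nonneg_left h4 hc.le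
          _ = ‖u‖ := by rw [hcdef]; field_simp
      calc Real.exp (-(β ^ 2)⁻¹ * V (β • u) + ∑ i, lam i * u i)
          ≤ Real.exp (-‖u‖) := h2
        _ ≤ ∏ i, Real.exp (-(c * |u i|)) := h3
        _ ≤ bound0 u := by
            rw [hB0]
            exact le_add_of_nonneg_left (Finset.prod_nonneg fun i _ => (Real.exp_pos _).le)
  -- pointwise limits
  have hptS : ∀ u : Fin d → ℝ,
      Filter.Tendsto (fun β : ℝ => Real.exp (-(β ^ 2)⁻¹ * V (β • u) + ∑ i, lam i * u i))
        (nhdsWithin 0 (Set.Ioi 0))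
        (nhds (Real.exp (∑ i, (-2⁻¹ * (u i) ^ 2 + lam i * u i)))) := by
    intro u
    have h1 := pointwise_limit hsmooth h0 hgrad u
    rw [quad_at_zero hhess] at h1
    have h2 : Filter.Tendsto (fun β : ℝ => -(β ^ 2)⁻¹ * V (β • u) + ∑ i, lam i * u i)
        (nhdsWithin 0 (Set.Ioi 0))
        (nhds (-((∑ i, (u i) ^ 2) / 2) + ∑ i, lam i * u i)) := by
      have := (h1.neg).add_const (∑ i, lam i * u i)
      refine this.congr fun β => by ring
    have h3 := (Real.continuous_exp.tendsto _).comp h2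
    have h4 : Real.exp (-((∑ i, (u i) ^ 2) / 2) + ∑ i, lam i * u i)
        = Real.exp (∑ i, (-2⁻¹ * (u i) ^ 2 + lam i * u i)) := by
      rw [sum_split]
      congr 2
      ring
    rw [h4] at h3
    exact h3
  -- eventual bound filter
  have hev : ∀ᶠ β : ℝ in nhdsWithin 0 (Set.Ioi 0), β ∈ Set.Ioc (0:ℝ) β₀ := by
    have : Set.Ioc (0:ℝ) β₀ ∈ nhdsWithin 0 (Set.Ioi 0) :=
      Ioc_mem_nhdsGT_of_mem ⟨le_refl 0, hβ₀⟩
    exact this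
  -- DCT for the normalization
  have hZ : Filter.Tendsto
      (fun β : ℝ => ∫ u : Fin d → ℝ, Real.exp (-(β ^ 2)⁻¹ * V (β • u) + ∑ i, lam i * u i))
      (nhdsWithin 0 (Set.Ioi 0))
      (nhds (∫ u : Fin d → ℝ, Real.exp (∑ i, (-2⁻¹ * (u i) ^ 2 + lam i * u i)))) := by
    apply tendsto_integral_filter_of_dominated_convergence bound0
    · exact Filter.Eventually.of_forall fun β => (hmeas β).aestronglyMeasurable
    · filter_upwards [hev] with β hβ
      apply Filter.Eventually.of_forall
      intro u
      rw [Real.norm_eq_abs, abs_of_pos (Real.exp_pos _)]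
      exact hexp β hβ.1 hβ.2 u
    · exact hbound0int
    · exact Filter.Eventually.of_forall fun u => hptS u
  -- DCT for the vector integral
  have hM : Filter.Tendsto
      (fun β : ℝ => ∫ u : Fin d → ℝ, Real.exp (-(β ^ 2)⁻¹ * V (β • u) + ∑ i, lam i * u i) • u)
      (nhdsWithin 0 (Set.Ioi 0))
      (nhds (∫ u : Fin d → ℝ, Real.exp (∑ i, (-2⁻¹ * (u i) ^ 2 + lam i * u i)) • u)) := by
    apply tendsto_integral_filter_of_dominated_convergence bound1
    · refine Filter.Eventually.of_forall fun β => Continuous.aestronglyMeasurable ?_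
      exact (hmeas β).smul continuous_id
    · filter_upwards [hev] with β hβ
      apply Filter.Eventually.of_forall
      intro u
      rw [norm_smul, Real.norm_eq_abs, abs_of_pos (Real.exp_pos _), hB1]
      apply mul_le_mul (hexp β hβ.1 hβ.2 u) (norm_le_sum_abs u) (norm_nonneg _)
      rw [hB0]
      positivity
    · exact hbound1int
    · exact Filter.Eventually.of_forall fun u => (hptS u).smul_const u
  -- identify the limits
  set Z : ℝ := ∫ u : Fin d → ℝ, Real.exp (∑ i, (-2⁻¹ * (u i) ^ 2 + lam i * u i)) with hZdef
  have hZpos : 0 < Z := gauss_pos 2⁻¹ (by norm_num) lam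
  have hvecint : Integrable
      (fun u : Fin d → ℝ => Real.exp (∑ i, (-2⁻¹ * (u i) ^ 2 + lam i * u i)) • u) := by
    have hg : Integrable (fun u : Fin d → ℝ =>
        (∏ i, Real.exp (-2⁻¹ * (u i) ^ 2 + lam i * u i)) * ∑ j, |u j|) := by
      have heq : (fun u : Fin d → ℝ =>
          (∏ i, Real.exp (-2⁻¹ * (u i) ^ 2 + lam i * u i)) * ∑ j, |u j|)
          = fun u => ∑ j, (∏ i, Real.exp (-2⁻¹ * (u i) ^ 2 + lam i * u i)) * |u j| := by
        funext u; rw [Finset.mul_sum]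
      rw [heq]
      exact integrable_finset_sum _ fun j _ => intProdQuadAbs 2⁻¹ (by norm_num) lam j
    refine Integrable.mono' hg (Continuous.aestronglyMeasurable ?_)
      (Filter.Eventually.of_forall fun u => ?_)
    · refine Continuous.smul (f := fun u : Fin d → ℝ => Real.exp (∑ i, (-2⁻¹ * (u i) ^ 2 + lam i * u i))) ?_ continuous_id
      exact Real.continuous_exp.comp (continuous_finset_sum _ fun i _ =>
        (continuous_const.mul ((continuous_apply i).pow 2)).add
          (continuous_const.mul (continuous_apply i)))
    · rw [norm_smul, Real.norm_eq_abs, abs_of_pos (Real.exp_pos _), exp_sum_eq_prod]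
      apply mul_le_mul_of_nonneg_left (norm_le_sum_abs u)
      positivity
  have hlimM : (∫ u : Fin d → ℝ, Real.exp (∑ i, (-2⁻¹ * (u i) ^ 2 + lam i * u i)) • u)
      = Z • lam := by
    funext j
    have hproj := (ContinuousLinearMap.proj (R := ℝ) (φ := fun _ : Fin d => ℝ) j
      ).integral_comp_comm hvecint
    have hL : ∀ u : Fin d → ℝ,
        (ContinuousLinearMap.proj (R := ℝ) (φ := fun _ : Fin d => ℝ) j)
          (Real.exp (∑ i, (-2⁻¹ * (u i) ^ 2 + lam i * u i)) • u)
        = Real.exp (∑ i, (-2⁻¹ * (u i) ^ 2 + lam i * u i)) * u j := by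
      intro u
      simp [ContinuousLinearMap.proj_apply]
    simp_rw [hL] at hproj
    have : (∫ u : Fin d → ℝ, Real.exp (∑ i, (-2⁻¹ * (u i) ^ 2 + lam i * u i)) • u) j
        = ∫ u : Fin d → ℝ, Real.exp (∑ i, (-2⁻¹ * (u i) ^ 2 + lam i * u i)) * u j := by
      rw [hproj]
      simp [ContinuousLinearMap.proj_apply]
    rw [this, gauss_moment lam j]
    simp [hZdef, Pi.smul_apply, smul_eq_mul, mul_comm]
  rw [hlimM] at hM
  have hfinal := (hZ.inv₀ hZpos.ne').smul hM
  rw [inv_smul_smul₀ hZpos.ne'] at hfinal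
  exact hfinal
end

section
/- Lyapunov function non-explosion bound: suppose V: ℝ^d → ℝ is smooth, convex, and satisfies ΔV(u) ≤ C₁(V(u)+1) + C₂·u for constants C₁>0, C₂ ∈ ℝ^d. Then Ψ(u) = Σ_{j∈𝕋_n}(V(u_j) + 1 + C₁^{-1}C₂·u_j) satisfies LΨ(u) ≤ C₁Ψ(u) for all u ∈ ℝ^{d×n}, where L is the generator with potential V (β=1). -/
open MeasureTheory

/-- Partial derivative `∂^i_j f(u) = ∂f/∂u^i_j`. -/
noncomputable def pd {d n : ℕ} [NeZero n] (i : Fin d) (j : ZMod n)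
    (f : (ZMod n → Fin d → ℝ) → ℝ) (u : ZMod n → Fin d → ℝ) : ℝ :=
  fderiv ℝ f u (Pi.single j (Pi.single i 1))

/-- `W^i_j(u) = ∂_i V(u_j)`. -/
noncomputable def Wgrad {d n : ℕ} [NeZero n] (V : (Fin d → ℝ) → ℝ) (i : Fin d) (j : ZMod n)
    (u : ZMod n → Fin d → ℝ) : ℝ :=
  fderiv ℝ V (u j) (Pi.single i 1)

/-- The generator
`L f = (1/2) Σ_{i,j} (∂^i_j - ∂^i_{j-1})² f + Σ_{i,j} (∂_iV(u_{j-1}) - ∂_iV(u_j)) ∂^i_j f`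
on `ℝ^{d×n}`, with periodic site index `j ∈ ℤ/nℤ`. -/
noncomputable def gen {d n : ℕ} [NeZero n] (V : (Fin d → ℝ) → ℝ)
    (f : (ZMod n → Fin d → ℝ) → ℝ) (u : ZMod n → Fin d → ℝ) : ℝ :=
  (1 / 2) * ∑ i : Fin d, ∑ j : ZMod n,
      (pd i j (pd i j f) u - pd i j (pd i (j - 1) f) u
        - pd i (j - 1) (pd i j f) u + pd i (j - 1) (pd i (j - 1) f) u)
    + ∑ i : Fin d, ∑ j : ZMod n, (Wgrad V i (j - 1) u - Wgrad V i j u) * pd i j f u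

section Aux

open Filter

/-- Derivative of a monotone function is nonnegative. -/
lemma mono_deriv_nonneg' {g : ℝ → ℝ} (hm : Monotone g) {g' x : ℝ}
    (h : HasDerivAt g g' x) : 0 ≤ g' := by
  rw [hasDerivAt_iff_tendsto_slope] at h
  have h2 : Tendsto (slope g x) (nhdsWithin x (Set.Ioi x)) (nhds g') :=
    h.mono_left (nhdsWithin_mono x fun y hy => ne_of_gt hy)
  refine ge_of_tendsto h2 ?_
  filter_upwards [self_mem_nhdsWithin] with y hy
  have hxy : x < y := hy
  have : 0 ≤ (g y - g x) / (y - x) :=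
    div_nonneg (sub_nonneg.2 (hm hxy.le)) (sub_nonneg.2 hxy.le)
  simpa [slope_def_field, div_eq_mul_inv] using this

/-- Second directional derivative of a smooth convex function is nonnegative. -/
lemma second_deriv_nonneg' {d : ℕ} (V : (Fin d → ℝ) → ℝ) (hV : ContDiff ℝ (⊤ : ℕ∞) V)
    (hconv : ConvexOn ℝ Set.univ V) (x e : Fin d → ℝ) :
    0 ≤ fderiv ℝ (fun y => fderiv ℝ V y e) x e := by
  set G : (Fin d → ℝ) → ℝ := fun y => fderiv ℝ V y e with hG
  have hVd : Differentiable ℝ V := hV.differentiable (by simp)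
  have hGd : Differentiable ℝ G :=
    ((hV.fderiv_right (m := (⊤ : ℕ∞)) (by simp)).differentiable (by simp)).clm_apply
      (differentiable_const e)
  have hcurve : ∀ t : ℝ, HasDerivAt (fun t : ℝ => x + t • e) e t := by
    intro t
    simpa using ((hasDerivAt_id t).smul_const e).const_add x
  have hφ : ∀ t : ℝ, HasDerivAt (fun t : ℝ => V (x + t • e)) (fderiv ℝ V (x + t • e) e) t :=
    fun t => (hVd (x + t • e)).hasFDerivAt.comp_hasDerivAt t (hcurve t)
  have hconvφ : ConvexOn ℝ Set.univ (fun t : ℝ => V (x + t • e)) := by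
    have h := hconv.comp_affineMap (AffineMap.lineMap x (x + e))
    have he : (V ∘ (AffineMap.lineMap x (x + e))) = fun t : ℝ => V (x + t • e) := by
      funext t
      simp [AffineMap.lineMap_apply, add_comm]
    rw [he] at h
    simpa using h
  have hmono : Monotone (fun t : ℝ => fderiv ℝ V (x + t • e) e) := by
    have h1 : Monotone (deriv (fun t : ℝ => V (x + t • e))) := by
      have := hconvφ.monotoneOn_deriv (fun t _ => (hφ t).differentiableAt)
      rwa [monotoneOn_univ] at this
    have h2 : deriv (fun t : ℝ => V (x + t • e)) = fun t => fderiv ℝ V (x + t • e) e := by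
      funext t; exact (hφ t).deriv
    rwa [h2] at h1
  have hg : HasDerivAt (fun t : ℝ => fderiv ℝ V (x + t • e) e) (fderiv ℝ G x e) 0 :=
    (hGd x).hasFDerivAt.comp_hasDerivAt_of_eq 0 (hcurve 0) (by simp)
  exact mono_deriv_nonneg' hmono hg

variable {d n : ℕ} [NeZero n]

/-- First derivative of Ψ. -/
lemma pdPsi (V : (Fin d → ℝ) → ℝ) (hV : ContDiff ℝ (⊤ : ℕ∞) V) (c : ℝ) (C₂ : Fin d → ℝ)
    (i : Fin d) (j : ZMod n) (u : ZMod n → Fin d → ℝ) :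
    pd i j (fun w => ∑ k : ZMod n, (V (w k) + 1 + c * ∑ i', C₂ i' * w k i')) u
      = Wgrad V i j u + c * C₂ i := by
  classical
  set Lc : (Fin d → ℝ) →L[ℝ] ℝ :=
    ∑ i' : Fin d, (c * C₂ i') • (ContinuousLinearMap.proj i') with hLc
  have hLcval : ∀ x : Fin d → ℝ, Lc x = c * ∑ i', C₂ i' * x i' := by
    intro x
    simp [hLc, ContinuousLinearMap.sum_apply, Finset.mul_sum, mul_assoc]
  have hF : HasFDerivAt (fun w : ZMod n → Fin d → ℝ =>
      ∑ k : ZMod n, (V (w k) + 1 + c * ∑ i', C₂ i' * w k i'))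
      (∑ k : ZMod n, ((fderiv ℝ V (u k) + Lc).comp
        (ContinuousLinearMap.proj (R := ℝ) (φ := fun _ : ZMod n => Fin d → ℝ) k))) u := by
    apply HasFDerivAt.fun_sum
    intro k _
    have h1 : HasFDerivAt (fun w : ZMod n → Fin d → ℝ => V (w k))
        ((fderiv ℝ V (u k)).comp
          (ContinuousLinearMap.proj (R := ℝ) (φ := fun _ : ZMod n => Fin d → ℝ) k)) u :=
      ((hV.differentiable (by simp) (u k)).hasFDerivAt).comp u (hasFDerivAt_apply k u)
    have h2 : HasFDerivAt (fun w : ZMod n → Fin d → ℝ => c * ∑ i', C₂ i' * w k i')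
        (Lc.comp (ContinuousLinearMap.proj (R := ℝ) (φ := fun _ : ZMod n => Fin d → ℝ) k)) u := by
      have := (Lc.comp
        (ContinuousLinearMap.proj (R := ℝ) (φ := fun _ : ZMod n => Fin d → ℝ) k)).hasFDerivAt
        (x := u)
      convert this using 1
      funext w
      exact (hLcval (w k)).symm
    have := (h1.add_const 1).add h2
    convert this using 1
    · rfl
    · exact ContinuousLinearMap.add_comp _ _ _
  rw [pd, hF.fderiv]
  rw [ContinuousLinearMap.sum_apply]
  rw [Finset.sum_eq_single j]
  · simp [Wgrad, hLcval, Pi.single_apply, Finset.mul_sum]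
  · intro k _ hk
    simp [Pi.single_eq_of_ne hk]
  · simp

/-- The diagonal second derivative `∂²V/∂x_i²`. -/
noncomputable def D2aux {d : ℕ} (V : (Fin d → ℝ) → ℝ) (i : Fin d) (x : Fin d → ℝ) : ℝ :=
  fderiv ℝ (fun y => fderiv ℝ V y (Pi.single i 1)) x (Pi.single i 1)

/-- Second derivatives. -/
lemma pd2' (V : (Fin d → ℝ) → ℝ) (hV : ContDiff ℝ (⊤ : ℕ∞) V) (c : ℝ)
    (i : Fin d) (a b : ZMod n) (u : ZMod n → Fin d → ℝ) :
    pd i a (fun w => Wgrad V i b w + c) u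
      = if a = b then D2aux V i (u b) else 0 := by
  classical
  set G : (Fin d → ℝ) → ℝ := fun y => fderiv ℝ V y (Pi.single i 1) with hG
  have hGd : Differentiable ℝ G :=
    ((hV.fderiv_right (m := (⊤ : ℕ∞)) (by simp)).differentiable (by simp)).clm_apply
      (differentiable_const _)
  have hF : HasFDerivAt (fun w : ZMod n → Fin d → ℝ => Wgrad V i b w + c)
      ((fderiv ℝ G (u b)).comp
        (ContinuousLinearMap.proj (R := ℝ) (φ := fun _ : ZMod n => Fin d → ℝ) b)) u :=
    by
      have h1 : HasFDerivAt (fun w : ZMod n → Fin d → ℝ => G (w b))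
          ((fderiv ℝ G (u b)).comp
            (ContinuousLinearMap.proj (R := ℝ) (φ := fun _ : ZMod n => Fin d → ℝ) b)) u :=
        HasFDerivAt.comp (g := G) (f := fun w : ZMod n → Fin d → ℝ => w b) u ((hGd (u b)).hasFDerivAt)
          (hasFDerivAt_apply (𝕜 := ℝ) (F' := fun _ : ZMod n => Fin d → ℝ) b u)
      exact h1.add_const c
  rw [pd, hF.fderiv]
  by_cases hab : a = b
  · subst hab
    simp [D2aux, Pi.single_eq_same, hG]
  · simp [hab, Pi.single_eq_of_ne hab]

/-- Reindexing a sum over `ZMod n` by a shift. -/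
lemma sum_shift (f : ZMod n → ℝ) : ∑ j : ZMod n, f (j - 1) = ∑ j : ZMod n, f j :=
  Fintype.sum_equiv (Equiv.subRight (1 : ZMod n)) _ _ (fun _ => rfl)

/-- The discrete summation-by-parts inequality. -/
lemma drift_nonpos (a : ZMod n → ℝ) (cc : ℝ) :
    ∑ j : ZMod n, (a (j - 1) - a j) * (a j + cc) ≤ 0 := by
  have key : ∑ j : ZMod n, (a (j - 1) - a j) * (a j + cc)
      = ∑ j : ZMod n, (-(1/2) * (a (j - 1) - a j)^2
          + ((1/2) * ((a (j - 1))^2 - (a j)^2) + cc * (a (j - 1) - a j))) :=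
    Finset.sum_congr rfl fun j _ => by ring
  rw [key, Finset.sum_add_distrib, Finset.sum_add_distrib]
  have h1 : ∑ j : ZMod n, (1/2) * ((a (j - 1))^2 - (a j)^2) = 0 := by
    rw [← Finset.mul_sum, Finset.sum_sub_distrib, sum_shift (fun j => (a j)^2)]
    ring
  have h2 : ∑ j : ZMod n, cc * (a (j - 1) - a j) = 0 := by
    rw [← Finset.mul_sum, Finset.sum_sub_distrib, sum_shift (fun j => a j)]
    ring
  have h3 : ∑ j : ZMod n, -(1/2) * (a (j - 1) - a j)^2 ≤ 0 :=
    Finset.sum_nonpos fun j _ => by nlinarith [sq_nonneg (a (j - 1) - a j)]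
  linarith

end Aux

/-- Lyapunov bound `LΨ ≤ C₁ Ψ` for `Ψ(u) = Σ_j (V(u_j) + 1 + C₁⁻¹ C₂·u_j)`. -/
theorem stmt_15 {d n : ℕ} [NeZero n]
    (V : (Fin d → ℝ) → ℝ) (hV : ContDiff ℝ (⊤ : ℕ∞) V) (hconv : ConvexOn ℝ Set.univ V)
    (C₁ : ℝ) (hC₁ : 0 < C₁) (C₂ : Fin d → ℝ)
    (hlap : ∀ x : Fin d → ℝ,
      (∑ i : Fin d, fderiv ℝ (fun y => fderiv ℝ V y (Pi.single i 1)) x (Pi.single i 1))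
        ≤ C₁ * (V x + 1) + ∑ i, C₂ i * x i)
    (u : ZMod n → Fin d → ℝ) :
    gen V (fun w => ∑ j : ZMod n, (V (w j) + 1 + C₁⁻¹ * ∑ i, C₂ i * w j i)) u
      ≤ C₁ * ∑ j : ZMod n, (V (u j) + 1 + C₁⁻¹ * ∑ i, C₂ i * u j i) := by
  classical
  have hpd : ∀ (i : Fin d) (j : ZMod n),
      pd i j (fun w => ∑ k : ZMod n, (V (w k) + 1 + C₁⁻¹ * ∑ i', C₂ i' * w k i')) =
        fun v => Wgrad V i j v + C₁⁻¹ * C₂ i :=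
    fun i j => funext fun v => pdPsi V hV C₁⁻¹ C₂ i j v
  rw [gen]
  simp only [hpd, pd2' V hV, eq_self_iff_true, if_true]
  have hD2 : ∀ (i : Fin d) (x : Fin d → ℝ), 0 ≤ D2aux V i x :=
    fun i x => second_deriv_nonneg' V hV hconv x _
  -- the drift part is nonpositive
  have hdrift : ∑ i : Fin d, ∑ j : ZMod n,
      (Wgrad V i (j - 1) u - Wgrad V i j u) * (Wgrad V i j u + C₁⁻¹ * C₂ i) ≤ 0 :=
    Finset.sum_nonpos fun i _ => drift_nonpos (fun j => Wgrad V i j u) _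
  -- the diffusive part
  have hle : ∀ (i : Fin d) (j : ZMod n),
      (D2aux V i (u j) - (if j = j - 1 then D2aux V i (u (j - 1)) else 0)
        - (if j - 1 = j then D2aux V i (u j) else 0) + D2aux V i (u (j - 1)))
      ≤ D2aux V i (u j) + D2aux V i (u (j - 1)) := by
    intro i j
    have e1 : (0:ℝ) ≤ (if j = j - 1 then D2aux V i (u (j - 1)) else 0) := by
      split_ifs with h
      · exact hD2 i _
      · exact le_rfl
    have e2 : (0:ℝ) ≤ (if j - 1 = j then D2aux V i (u j) else 0) := by
      split_ifs with h
      · exact hD2 i _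
      · exact le_rfl
    linarith
  have step1 : ∑ i : Fin d, ∑ j : ZMod n,
      (D2aux V i (u j) - (if j = j - 1 then D2aux V i (u (j - 1)) else 0)
        - (if j - 1 = j then D2aux V i (u j) else 0) + D2aux V i (u (j - 1)))
      ≤ ∑ i : Fin d, ∑ j : ZMod n, (D2aux V i (u j) + D2aux V i (u (j - 1))) :=
    Finset.sum_le_sum fun i _ => Finset.sum_le_sum fun j _ => hle i j
  have step2 : ∑ i : Fin d, ∑ j : ZMod n, (D2aux V i (u j) + D2aux V i (u (j - 1)))
      = 2 * ∑ j : ZMod n, ∑ i : Fin d, D2aux V i (u j) := by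
    have h1 : ∀ i : Fin d, ∑ j : ZMod n, (D2aux V i (u j) + D2aux V i (u (j - 1)))
        = 2 * ∑ j : ZMod n, D2aux V i (u j) := by
      intro i
      rw [Finset.sum_add_distrib, sum_shift (fun j => D2aux V i (u j))]
      ring
    rw [Finset.sum_congr rfl (fun i _ => h1 i), ← Finset.mul_sum, Finset.sum_comm]
  have hA := step1.trans (le_of_eq step2)
  have hsum : ∑ j : ZMod n, ∑ i : Fin d, D2aux V i (u j)
      ≤ ∑ j : ZMod n, (C₁ * (V (u j) + 1) + ∑ i, C₂ i * u j i) :=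
    Finset.sum_le_sum fun j _ => hlap (u j)
  have hrhs : ∑ j : ZMod n, (C₁ * (V (u j) + 1) + ∑ i, C₂ i * u j i)
      = C₁ * ∑ j : ZMod n, (V (u j) + 1 + C₁⁻¹ * ∑ i, C₂ i * u j i) := by
    rw [Finset.mul_sum]
    refine Finset.sum_congr rfl fun j _ => ?_
    field_simp
  calc (1 / 2 : ℝ) * ∑ i : Fin d, ∑ j : ZMod n,
      (D2aux V i (u j) - (if j = j - 1 then D2aux V i (u (j - 1)) else 0)
        - (if j - 1 = j then D2aux V i (u j) else 0) + D2aux V i (u (j - 1)))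
      + ∑ i : Fin d, ∑ j : ZMod n,
          (Wgrad V i (j - 1) u - Wgrad V i j u) * (Wgrad V i j u + C₁⁻¹ * C₂ i)
      ≤ (1 / 2 : ℝ) * (2 * ∑ j : ZMod n, ∑ i : Fin d, D2aux V i (u j)) + 0 :=
        add_le_add (mul_le_mul_of_nonneg_left hA (by norm_num)) hdrift
    _ = ∑ j : ZMod n, ∑ i : Fin d, D2aux V i (u j) := by ring
    _ ≤ ∑ j : ZMod n, (C₁ * (V (u j) + 1) + ∑ i, C₂ i * u j i) := hsum
    _ = C₁ * ∑ j : ZMod n, (V (u j) + 1 + C₁⁻¹ * ∑ i, C₂ i * u j i) := hrhs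
end
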